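/- For all n ≥ k ≥ 0, U(n,k) = Σ_{i=k}^{n} C(n,i) · (-r)^{n-i} · U_r(i,k), where U(n,k) = U_0(n,k). -/

import Mathlib

/-!
Let `S n k = ∑ᵢ C(n,i) (-r)^(n-i) U_r(i,k)`. Pascal's rule splits `S (n+1) (k+1)` into
`-r · S n (k+1)` plus the same transform of `i ↦ U_r(i+1,k+1)`, which the recurrence of `U_r`
turns into `S n k + ((k+1)² + r) · S n (k+1)`. The two `r`-terms cancel, so `S` satisfies the
recurrence of `U_0`; in column `0`, `U_r(i+1,0) = r · U_r(i,0)` makes `S (n+1) 0` vanish the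
same way.
-/

open Finset

/-- `centralU r n k` is the r-central factorial number with even indices of the second kind. -/
def centralU (r : ℕ) : ℕ → ℕ → ℤ
  | 0, 0 => 1
  | 0, _ + 1 => 0
  | n + 1, 0 => (r : ℤ) ^ (n + 1)
  | n + 1, k + 1 => centralU r n k + (((k : ℤ) + 1) ^ 2 + r) * centralU r n (k + 1)

theorem sum_range_choose_succ_mul_pow {R : Type*} [CommSemiring R] (a : R) (f : ℕ → R)
    (n : ℕ) :
    ∑ i ∈ range (n + 2), ((n + 1).choose i : R) * a ^ (n + 1 - i) * f i =
      a * ∑ i ∈ range (n + 1), (n.choose i : R) * a ^ (n - i) * f i +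
        ∑ i ∈ range (n + 1), (n.choose i : R) * a ^ (n - i) * f (i + 1) := by
  simp only [mul_assoc]
  rw [sum_choose_succ_mul (fun i j ↦ a ^ j * f i), mul_sum]
  congr 1
  refine sum_congr rfl fun i hi ↦ ?_
  rw [Nat.sub_add_comm (Nat.lt_succ_iff.mp (mem_range.mp hi)), pow_succ]
  ring

namespace centralU

variable (r : ℕ)

@[simp]
theorem zero_zero : centralU r 0 0 = 1 := rfl

@[simp]
theorem zero_succ (k : ℕ) : centralU r 0 (k + 1) = 0 := rfl

@[simp]
theorem right_zero (n : ℕ) : centralU r n 0 = (r : ℤ) ^ n := by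
  cases n <;> rfl

theorem succ_succ (n k : ℕ) :
    centralU r (n + 1) (k + 1) =
      centralU r n k + (((k : ℤ) + 1) ^ 2 + r) * centralU r n (k + 1) := rfl

theorem eq_zero_of_lt {n k : ℕ} (h : n < k) : centralU r n k = 0 := by
  induction n generalizing k with
  | zero => obtain ⟨k, rfl⟩ := Nat.exists_eq_add_one_of_ne_zero (by omega : k ≠ 0); rfl
  | succ n ih =>
    obtain ⟨k, rfl⟩ := Nat.exists_eq_add_one_of_ne_zero (by omega : k ≠ 0)
    rw [succ_succ, ih (by omega), ih (by omega), mul_zero, add_zero]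

theorem zero_eq_sum_range (n k : ℕ) :
    centralU 0 n k =
      ∑ i ∈ range (n + 1), (n.choose i : ℤ) * (-(r : ℤ)) ^ (n - i) * centralU r i k := by
  induction n generalizing k with
  | zero => cases k <;> simp
  | succ n ih =>
    rw [sum_range_choose_succ_mul_pow]
    cases k with
    | zero =>
      simp only [right_zero, pow_succ, ← mul_assoc, ← sum_mul]
      ring
    | succ k =>
      simp only [succ_succ, mul_add, sum_add_distrib, mul_left_comm _ (((k : ℤ) + 1) ^ 2 + r),
        ← mul_sum, ← ih]
      push_cast
      ring

end centralU

theorem centralU_zero_eq_sum_centralU_general (r n k : ℕ) :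
    centralU 0 n k =
      ∑ i ∈ Finset.Icc k n, (n.choose i : ℤ) * (-(r : ℤ)) ^ (n - i) * centralU r i k := by
  have hsub : Icc k n ⊆ range (n + 1) := fun i hi ↦
    mem_range.mpr (Nat.lt_succ_of_le (mem_Icc.mp hi).2)
  rw [centralU.zero_eq_sum_range r]
  refine (sum_subset hsub fun i hi hik ↦ ?_).symm
  have : i < k := by simp only [mem_range, mem_Icc] at hi hik; omega
  rw [centralU.eq_zero_of_lt r this, mul_zero]

theorem centralU_zero_eq_sum_centralU (r n k : ℕ) (h : k ≤ n) :
    centralU 0 n k =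
      ∑ i ∈ Finset.Icc k n, (n.choose i : ℤ) * (-(r : ℤ)) ^ (n - i) * centralU r i k :=
  centralU_zero_eq_sum_centralU_general r n k
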